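/- Let N ≥ 1, T ≥ 1, and H ≥ 1 be natural numbers, let h : Fin N → ℝ be a synthesis window, and for a spectrogram S : Fin T → Fin N → ℂ define the overlap-add ISTFT signal x_S : ℤ → ℂ by x_S(n) = Σ_{t < T} [if 0 ≤ n − tH < N then h(n − tH) · Σ_{k < N} S(t,k) · exp(2πi·k·(n − tH)/N) else 0]. Then for any two spectrograms S₁, S₂ : Fin T → Fin N → ℂ, (Σ_{n ∈ ℤ} |x_{S₁}(n) − x_{S₂}(n)|²)^{1/2} ≤ (max_{m < N} |h(m)|) · √(N·T) · (Σ_{t < T} Σ_{k < N} |S₁(t,k) − S₂(t,k)|²)^{1/2}. In particular, the ISTFT operator is Lipschitz continuous with constant L_ISTFT ≤ ‖h‖_∞ · √(N·T). -/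

import Mathlib

open Complex Real

/-- Overlap-add ISTFT: given a spectrogram `S : Fin T → Fin N → ℂ` (T frames, N bins)
with hop size `H` and synthesis window `h : Fin N → ℝ`, the reconstructed signal at
time `n ∈ ℤ` is the sum over frames of the windowed, shifted unnormalized inverse DFT:
`x_S(n) = Σ_{t<T} [if 0 ≤ n − tH < N then h(n−tH) · Σ_{k<N} S(t,k)·exp(2πi·k·(n−tH)/N) else 0]`. -/
noncomputable def olaISTFT (N T H : ℕ) (h : Fin N → ℝ)
    (S : Fin T → Fin N → ℂ) (n : ℤ) : ℂ :=
  ∑ t : Fin T,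
    if hc : 0 ≤ n - (t : ℤ) * H ∧ n - (t : ℤ) * H < N then
      (h ⟨(n - (t : ℤ) * H).toNat, by omega⟩ : ℂ) *
        ∑ k : Fin N, S t k *
          Complex.exp (2 * Real.pi * Complex.I * (k : ℕ) * ((n - (t : ℤ) * H) : ℤ) / N)
    else 0

/-!
Both reconstructions are linear in the spectrogram, so the difference is the reconstruction of
`S₁ - S₂` and it suffices to bound the energy of a single signal. At each time the signal is a
sum of `T` windowed frames, and Cauchy–Schwarz costs a factor `T`. Each frame lives on `N`
consecutive samples, where the window contributes at most `‖h‖_∞²` and, by orthogonality of the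
`N`-th roots of unity, the unnormalized inverse DFT has exactly `N` times the energy of its
coefficients.
-/

open ComplexConjugate Finset

theorem sum_norm_sum_mul_sq_of_orthogonal {ι κ : Type*} [Fintype ι] [Fintype κ] [DecidableEq ι]
    (e : ι → κ → ℂ) (a : ℝ)
    (he : ∀ i j, ∑ m, conj (e i m) * e j m = if i = j then (a : ℂ) else 0) (c : ι → ℂ) :
    ∑ m, ‖∑ i, c i * e i m‖ ^ 2 = a * ∑ i, ‖c i‖ ^ 2 := by
  suffices h : (∑ m, (‖∑ i, c i * e i m‖ ^ 2 : ℝ) : ℂ) = (a * ∑ i, ‖c i‖ ^ 2 : ℝ) by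
    exact_mod_cast h
  calc (∑ m, (‖∑ i, c i * e i m‖ ^ 2 : ℝ) : ℂ)
      = ∑ m, ∑ i, ∑ j, conj (c i) * c j * (conj (e i m) * e j m) := by
        push_cast
        simp only [← conj_mul', map_sum, map_mul, sum_mul_sum]
        exact sum_congr rfl fun m _ => sum_congr rfl fun i _ => sum_congr rfl fun j _ => by ring
    _ = ∑ i, ∑ j, conj (c i) * c j * ∑ m, conj (e i m) * e j m := by
        rw [sum_comm]
        refine sum_congr rfl fun i _ => ?_
        rw [sum_comm]
        simp only [mul_sum]
    _ = (a * ∑ i, ‖c i‖ ^ 2 : ℝ) := by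
        push_cast
        simp only [he, mul_ite, mul_zero, sum_ite_eq, mem_univ, if_true, conj_mul', mul_sum]
        exact sum_congr rfl fun i _ => mul_comm _ _

theorem sum_conj_exp_mul_exp (N : ℕ) [NeZero N] (k k' : Fin N) :
    ∑ m : Fin N, conj (exp (2 * π * I * (k : ℕ) * (m : ℕ) / N)) *
        exp (2 * π * I * (k' : ℕ) * (m : ℕ) / N) = if k = k' then (N : ℂ) else 0 := by
  have hω := isPrimitiveRoot_exp N (NeZero.ne N)
  set ζ := exp (2 * π * I / N) ^ ((k' : ℤ) - k)
  have hterm : ∀ m : ℕ, conj (exp (2 * π * I * (k : ℕ) * m / N)) *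
      exp (2 * π * I * (k' : ℕ) * m / N) = ζ ^ m := by
    intro m
    rw [← exp_conj, ← Complex.exp_add, ← zpow_natCast, ← zpow_mul, ← exp_int_mul]
    congr 1
    simp only [map_div₀, map_mul, map_ofNat, conj_ofReal, conj_I, map_natCast]
    push_cast
    ring
  simp only [hterm, Fin.sum_univ_eq_sum_range (ζ ^ ·)]
  split_ifs with hkk
  · simp [ζ, hkk]
  have hζ : ζ ≠ 1 := by
    rw [Ne, hω.zpow_eq_one_iff_dvd]
    intro hdvd
    refine hkk (Fin.ext ?_)
    have := Int.eq_zero_of_abs_lt_dvd hdvd (by rw [abs_lt]; omega)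
    omega
  have hζN : ζ ^ N = 1 := by
    rw [← zpow_natCast, ← zpow_mul, mul_comm _ (N : ℤ), zpow_mul, hω.zpow_eq_one, one_zpow]
  rw [geom_sum_eq hζ, hζN, sub_self, zero_div]

theorem tsum_norm_sum_sq_le_card_mul {ι α E : Type*} [Fintype ι] [SeminormedAddCommGroup E]
    (f : ι → α → E) (hf : ∀ i, Summable fun a => ‖f i a‖ ^ 2) :
    ∑' a, ‖∑ i, f i a‖ ^ 2 ≤ Fintype.card ι * ∑ i, ∑' a, ‖f i a‖ ^ 2 := by
  have hpoint : ∀ a, ‖∑ i, f i a‖ ^ 2 ≤ Fintype.card ι * ∑ i, ‖f i a‖ ^ 2 := fun a =>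
    (pow_le_pow_left₀ (norm_nonneg _) (norm_sum_le _ _) 2).trans sq_sum_le_card_mul_sum_sq
  have hsum : Summable fun a => (Fintype.card ι : ℝ) * ∑ i, ‖f i a‖ ^ 2 :=
    (summable_sum fun i _ => hf i).mul_left _
  calc ∑' a, ‖∑ i, f i a‖ ^ 2
      ≤ ∑' a, (Fintype.card ι : ℝ) * ∑ i, ‖f i a‖ ^ 2 :=
        (hsum.of_nonneg_of_le (fun _ => by positivity) hpoint).tsum_le_tsum hpoint hsum
    _ = Fintype.card ι * ∑ i, ∑' a, ‖f i a‖ ^ 2 := by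
        rw [tsum_mul_left, Summable.tsum_finsetSum fun i _ => hf i]

noncomputable def idft (N : ℕ) (c : Fin N → ℂ) (m : ℤ) : ℂ :=
  ∑ k : Fin N, c k * exp (2 * π * I * (k : ℕ) * m / N)

theorem idft_sub (N : ℕ) (c₁ c₂ : Fin N → ℂ) (m : ℤ) :
    idft N (c₁ - c₂) m = idft N c₁ m - idft N c₂ m := by
  simp only [idft, Pi.sub_apply, sub_mul, sum_sub_distrib]

theorem sum_norm_idft_sq (N : ℕ) [NeZero N] (c : Fin N → ℂ) :
    ∑ m : Fin N, ‖idft N c m‖ ^ 2 = N * ∑ k, ‖c k‖ ^ 2 := by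
  simpa [idft] using sum_norm_sum_mul_sq_of_orthogonal
    (fun k m : Fin N => exp (2 * π * I * (k : ℕ) * (m : ℕ) / N)) N (sum_conj_exp_mul_exp N) c

noncomputable def olaFrame (N : ℕ) (h : Fin N → ℝ) (c : Fin N → ℂ) (t₀ n : ℤ) : ℂ :=
  if hc : 0 ≤ n - t₀ ∧ n - t₀ < N then
    (h ⟨(n - t₀).toNat, by omega⟩ : ℂ) * idft N c (n - t₀)
  else 0

section olaFrame

variable {N : ℕ} (h : Fin N → ℝ) (c : Fin N → ℂ) (t₀ : ℤ)

theorem olaFrame_sub (c₁ c₂ : Fin N → ℂ) (n : ℤ) :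
    olaFrame N h (c₁ - c₂) t₀ n = olaFrame N h c₁ t₀ n - olaFrame N h c₂ t₀ n := by
  unfold olaFrame
  split_ifs <;> simp only [idft_sub, mul_sub, sub_zero]

theorem olaFrame_add_val (m : Fin N) : olaFrame N h c t₀ (t₀ + m) = h m * idft N c m := by
  rw [olaFrame, dif_pos (by omega)]
  simp only [add_sub_cancel_left, Int.toNat_natCast, Fin.eta]

theorem support_norm_olaFrame_sq_subset :
    (Function.support fun n => ‖olaFrame N h c t₀ n‖ ^ 2) ⊆ Set.range fun m : Fin N => t₀ + m := by
  intro n hn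
  rw [Function.mem_support, pow_ne_zero_iff two_ne_zero, norm_ne_zero_iff, olaFrame, ne_eq,
    dite_eq_right_iff, not_forall] at hn
  obtain ⟨hc, -⟩ := hn
  exact ⟨⟨(n - t₀).toNat, by omega⟩, by simp only; omega⟩

theorem summable_norm_olaFrame_sq : Summable fun n => ‖olaFrame N h c t₀ n‖ ^ 2 :=
  summable_of_hasFiniteSupport <|
    (Set.finite_range _).subset (support_norm_olaFrame_sq_subset h c t₀)

theorem tsum_norm_olaFrame_sq :
    ∑' n, ‖olaFrame N h c t₀ n‖ ^ 2 = ∑ m : Fin N, h m ^ 2 * ‖idft N c m‖ ^ 2 := by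
  have hinj : Function.Injective fun m : Fin N => t₀ + m := fun m m' hm => by
    simp only [add_right_inj, Nat.cast_inj] at hm
    exact Fin.ext hm
  rw [← hinj.tsum_eq (support_norm_olaFrame_sq_subset h c t₀), tsum_fintype]
  simp only [olaFrame_add_val, norm_mul, mul_pow, norm_real, Real.norm_eq_abs, sq_abs]

theorem tsum_norm_olaFrame_sq_le [NeZero N] {M : ℝ} (hM : ∀ m, |h m| ≤ M) :
    ∑' n, ‖olaFrame N h c t₀ n‖ ^ 2 ≤ M ^ 2 * (N * ∑ k, ‖c k‖ ^ 2) := by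
  rw [tsum_norm_olaFrame_sq, ← sum_norm_idft_sq, mul_sum]
  refine sum_le_sum fun m _ => mul_le_mul_of_nonneg_right ?_ (by positivity)
  exact sq_le_sq' (neg_le_of_abs_le (hM m)) (le_of_abs_le (hM m))

end olaFrame

section olaISTFT

variable {N T : ℕ} (H : ℕ) (h : Fin N → ℝ)

theorem olaISTFT_eq_sum_olaFrame (S : Fin T → Fin N → ℂ) (n : ℤ) :
    olaISTFT N T H h S n = ∑ t, olaFrame N h (S t) (t * H) n :=
  rfl

theorem olaISTFT_sub (S₁ S₂ : Fin T → Fin N → ℂ) (n : ℤ) :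
    olaISTFT N T H h (S₁ - S₂) n = olaISTFT N T H h S₁ n - olaISTFT N T H h S₂ n := by
  simp only [olaISTFT_eq_sum_olaFrame, Pi.sub_apply, olaFrame_sub, sum_sub_distrib]

theorem tsum_norm_olaISTFT_sq_le [NeZero N] (S : Fin T → Fin N → ℂ) {M : ℝ}
    (hM : ∀ m, |h m| ≤ M) :
    ∑' n, ‖olaISTFT N T H h S n‖ ^ 2 ≤ M ^ 2 * (N * T) * ∑ t, ∑ k, ‖S t k‖ ^ 2 :=
  calc ∑' n, ‖olaISTFT N T H h S n‖ ^ 2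
      ≤ T * ∑ t : Fin T, ∑' n, ‖olaFrame N h (S t) (t * H) n‖ ^ 2 := by
        simp only [olaISTFT_eq_sum_olaFrame]
        simpa using tsum_norm_sum_sq_le_card_mul _ fun t : Fin T =>
          summable_norm_olaFrame_sq h (S t) (t * H)
    _ ≤ T * ∑ t : Fin T, M ^ 2 * (N * ∑ k, ‖S t k‖ ^ 2) := by
        gcongr with t
        exact tsum_norm_olaFrame_sq_le h (S t) _ hM
    _ = M ^ 2 * (N * T) * ∑ t, ∑ k, ‖S t k‖ ^ 2 := by
        simp only [← mul_sum]
        ring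

end olaISTFT

theorem istft_lipschitz_general (N T H : ℕ) (hN : 1 ≤ N)
    (h : Fin N → ℝ) (S₁ S₂ : Fin T → Fin N → ℂ) :
    Real.sqrt (∑' n : ℤ, ‖olaISTFT N T H h S₁ n - olaISTFT N T H h S₂ n‖ ^ 2) ≤
      (Finset.univ.sup' (Finset.univ_nonempty_iff.mpr ⟨⟨0, hN⟩⟩) fun m : Fin N => |h m|) *
        Real.sqrt (N * T) *
        Real.sqrt (∑ t : Fin T, ∑ k : Fin N, ‖S₁ t k - S₂ t k‖ ^ 2) := by
  have : NeZero N := ⟨by omega⟩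
  set M := Finset.univ.sup' (Finset.univ_nonempty_iff.mpr ⟨⟨0, hN⟩⟩) fun m : Fin N => |h m|
  have hM : ∀ m, |h m| ≤ M := fun m => le_sup' (fun m : Fin N => |h m|) (mem_univ m)
  have hM₀ : 0 ≤ M := (abs_nonneg _).trans (hM ⟨0, hN⟩)
  simp only [← olaISTFT_sub]
  calc √(∑' n, ‖olaISTFT N T H h (S₁ - S₂) n‖ ^ 2)
      ≤ √(M ^ 2 * (N * T) * ∑ t, ∑ k, ‖(S₁ - S₂) t k‖ ^ 2) :=
        Real.sqrt_le_sqrt (tsum_norm_olaISTFT_sq_le H h (S₁ - S₂) hM)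
    _ = M * √(N * T) * √(∑ t, ∑ k, ‖S₁ t k - S₂ t k‖ ^ 2) := by
        rw [Real.sqrt_mul (by positivity), Real.sqrt_mul (by positivity), Real.sqrt_sq hM₀]
        rfl

/-- **Lemma (ISTFT Lipschitz Continuity).**
For any two spectrograms `S₁, S₂ : Fin T → Fin N → ℂ`,
`‖ISTFT S₁ − ISTFT S₂‖₂ ≤ ‖h‖_∞ · √(N·T) · ‖S₁ − S₂‖₂`,
where `‖h‖_∞ = max_{m<N} |h m|` and the spectrogram norm is the entrywise ℓ² norm.
In particular the ISTFT operator is Lipschitz with constant at most `‖h‖_∞ · √(N·T)`. -/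
theorem istft_lipschitz (N T H : ℕ) (hN : 1 ≤ N) (hT : 1 ≤ T) (hH : 1 ≤ H)
    (h : Fin N → ℝ) (S₁ S₂ : Fin T → Fin N → ℂ) :
    Real.sqrt (∑' n : ℤ, ‖olaISTFT N T H h S₁ n - olaISTFT N T H h S₂ n‖ ^ 2) ≤
      (Finset.univ.sup' (Finset.univ_nonempty_iff.mpr ⟨⟨0, hN⟩⟩) fun m : Fin N => |h m|) *
        Real.sqrt (N * T) *
        Real.sqrt (∑ t : Fin T, ∑ k : Fin N, ‖S₁ t k - S₂ t k‖ ^ 2) :=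
  istft_lipschitz_general N T H hN h S₁ S₂
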